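/- arXiv:2309.06446 — 3 statements merged into one kernel-verified Lean document; each statement's English description precedes it below -/
import Mathlib

section
/- Fix S > 0. For all a₁, a₂ ∈ ℝ, c > 0 and 0 < S₁ < 2S one has l(a₁,a₂,c,S₁) ≥ 4√(2S)/S, with equality if and only if a₁ = a₂ = 0, c = √S and S₁ = S. -/
set_option maxHeartbeats 1000000

noncomputable section

/-- The quantity `l(a₁,a₂,c,S₁)` associated with the quadrilateral with parameters
(a₁, a₂, c, S₁) and area 2S, with S₂ = 2S − S₁. -/
def lfun (S a₁ a₂ c S₁ : ℝ) : ℝ :=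
  (Real.sqrt (S₁ ^ 2 / c ^ 2 + (a₁ + c) ^ 2) +
    Real.sqrt (S₁ ^ 2 / c ^ 2 + (a₁ - c) ^ 2)) / S₁ +
  (Real.sqrt ((2 * S - S₁) ^ 2 / c ^ 2 + (a₂ + c) ^ 2) +
    Real.sqrt ((2 * S - S₁) ^ 2 / c ^ 2 + (a₂ - c) ^ 2)) / (2 * S - S₁)

lemma lfun_key (d c a : ℝ) (hd : 0 < d) (hc : 0 < c) :
    2 * Real.sqrt (2 * (d * c)) ≤
      Real.sqrt (d ^ 2 + (a + c) ^ 2) + Real.sqrt (d ^ 2 + (a - c) ^ 2) ∧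
    (Real.sqrt (d ^ 2 + (a + c) ^ 2) + Real.sqrt (d ^ 2 + (a - c) ^ 2)
        = 2 * Real.sqrt (2 * (d * c)) ↔ a = 0 ∧ c = d) := by
  set A := Real.sqrt (d ^ 2 + (a + c) ^ 2) with hAdef
  set B := Real.sqrt (d ^ 2 + (a - c) ^ 2) with hBdef
  have hA0 : (0:ℝ) ≤ A := Real.sqrt_nonneg _
  have hB0 : (0:ℝ) ≤ B := Real.sqrt_nonneg _
  have hA2 : A ^ 2 = d ^ 2 + (a + c) ^ 2 := Real.sq_sqrt (by positivity)
  have hB2 : B ^ 2 = d ^ 2 + (a - c) ^ 2 := Real.sq_sqrt (by positivity)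
  have hABsq : (A * B) ^ 2 = (d ^ 2 + c ^ 2 - a ^ 2) ^ 2 + 4 * a ^ 2 * d ^ 2 := by
    have : (A * B) ^ 2 = A ^ 2 * B ^ 2 := by ring
    rw [this, hA2, hB2]; ring
  have hAB : d ^ 2 + c ^ 2 - a ^ 2 ≤ A * B := by
    nlinarith [mul_nonneg hA0 hB0, sq_nonneg (A * B + (d ^ 2 + c ^ 2 - a ^ 2)),
      sq_nonneg (A * B - (d ^ 2 + c ^ 2 - a ^ 2)), sq_nonneg (a * d)]
  have hsumsq : 4 * d ^ 2 + 4 * c ^ 2 ≤ (A + B) ^ 2 := by nlinarith [hAB, hA2, hB2]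
  have h8 : 8 * (d * c) ≤ (A + B) ^ 2 := by nlinarith [sq_nonneg (d - c)]
  have hABnn : 0 ≤ A + B := add_nonneg hA0 hB0
  have h2s : 2 * Real.sqrt (2 * (d * c)) = Real.sqrt (8 * (d * c)) := by
    have h4 : Real.sqrt 4 = 2 := by
      rw [show (4:ℝ) = 2 ^ 2 by norm_num, Real.sqrt_sq]; norm_num
    rw [show (8:ℝ) * (d * c) = 4 * (2 * (d * c)) by ring,
      Real.sqrt_mul (by norm_num : (0:ℝ) ≤ 4), h4]
  have hineq : 2 * Real.sqrt (2 * (d * c)) ≤ A + B := by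
    rw [h2s]
    calc Real.sqrt (8 * (d * c)) ≤ Real.sqrt ((A + B) ^ 2) := Real.sqrt_le_sqrt h8
    _ = A + B := Real.sqrt_sq hABnn
  refine ⟨hineq, ?_, ?_⟩
  · intro heq
    have hsq : (A + B) ^ 2 = 8 * (d * c) := by
      rw [heq]
      have : Real.sqrt (2 * (d * c)) ^ 2 = 2 * (d * c) := Real.sq_sqrt (by positivity)
      nlinarith [this]
    have hcd : c = d := by nlinarith [hsumsq, sq_nonneg (d - c)]
    have ha : a = 0 := by
      have hABle : A * B ≤ d ^ 2 + c ^ 2 - a ^ 2 := by nlinarith [hA2, hB2]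
      have hABeq : A * B = d ^ 2 + c ^ 2 - a ^ 2 := le_antisymm hABle hAB
      have : 4 * a ^ 2 * d ^ 2 = 0 := by nlinarith [hABsq, hABeq]
      have ha2 : a ^ 2 = 0 := by
        rcases mul_eq_zero.mp this with h | h
        · rcases mul_eq_zero.mp h with h' | h'
          · norm_num at h'
          · exact h'
        · exact absurd h (by positivity)
      exact pow_eq_zero_iff (by norm_num) |>.mp ha2
    exact ⟨ha, hcd⟩
  · rintro ⟨ha, hcd⟩
    rw [hAdef, hBdef, ha, hcd,
      show d ^ 2 + ((0:ℝ) + d) ^ 2 = 2 * (d * d) by ring,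
      show d ^ 2 + ((0:ℝ) - d) ^ 2 = 2 * (d * d) by ring]
    ring

lemma lfun_branch (T a c : ℝ) (hT : 0 < T) (hc : 0 < c) :
    2 * Real.sqrt 2 / Real.sqrt T ≤
      (Real.sqrt (T ^ 2 / c ^ 2 + (a + c) ^ 2) +
        Real.sqrt (T ^ 2 / c ^ 2 + (a - c) ^ 2)) / T ∧
    ((Real.sqrt (T ^ 2 / c ^ 2 + (a + c) ^ 2) +
        Real.sqrt (T ^ 2 / c ^ 2 + (a - c) ^ 2)) / T
        = 2 * Real.sqrt 2 / Real.sqrt T ↔ a = 0 ∧ c = Real.sqrt T) := by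
  have hd : 0 < T / c := div_pos hT hc
  have hdc : T / c * c = T := div_mul_cancel₀ T hc.ne'
  have hpow : T ^ 2 / c ^ 2 = (T / c) ^ 2 := (div_pow T c 2).symm
  obtain ⟨hk, hkeq⟩ := lfun_key (T / c) c a hd hc
  rw [hdc] at hk hkeq
  rw [hpow]
  have hsT : 0 < Real.sqrt T := Real.sqrt_pos.mpr hT
  have hmul : Real.sqrt T * Real.sqrt T = T := Real.mul_self_sqrt hT.le
  have hRHS : 2 * Real.sqrt 2 / Real.sqrt T = 2 * Real.sqrt (2 * T) / T := by
    rw [Real.sqrt_mul (by norm_num : (0:ℝ) ≤ 2), div_eq_div_iff hsT.ne' hT.ne']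
    linear_combination (-2) * Real.sqrt 2 * (Real.sq_sqrt hT.le)
  have hceq : (c = T / c) ↔ c = Real.sqrt T := by
    constructor
    · intro h
      have h2 : c * c = T := by
        calc c * c = T / c * c := by rw [← h]
        _ = T := hdc
      rw [← h2]
      exact (Real.sqrt_mul_self hc.le).symm
    · intro h
      rw [h, eq_div_iff hsT.ne']
      exact hmul
  rw [hRHS]
  constructor
  · gcongr
  · constructor
    · intro h
      obtain ⟨ha, hcd⟩ := hkeq.mp ((div_left_inj' hT.ne').mp h)
      exact ⟨ha, hceq.mp hcd⟩
    · rintro ⟨ha, hcs⟩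
      rw [hkeq.mpr ⟨ha, hceq.mpr hcs⟩]

lemma lfun_sumInv (S S₁ : ℝ) (hS : 0 < S) (h1 : 0 < S₁) (h2 : S₁ < 2 * S) :
    2 / Real.sqrt S ≤ 1 / Real.sqrt S₁ + 1 / Real.sqrt (2 * S - S₁) ∧
    (1 / Real.sqrt S₁ + 1 / Real.sqrt (2 * S - S₁) = 2 / Real.sqrt S ↔ S₁ = S) := by
  have hS2 : 0 < 2 * S - S₁ := by linarith
  set u := Real.sqrt S₁ with hu'
  set v := Real.sqrt (2 * S - S₁) with hv'
  set s := Real.sqrt S with hs'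
  have hu : 0 < u := Real.sqrt_pos.mpr h1
  have hv : 0 < v := Real.sqrt_pos.mpr hS2
  have hs : 0 < s := Real.sqrt_pos.mpr hS
  have hu2 : u ^ 2 = S₁ := Real.sq_sqrt h1.le
  have hv2 : v ^ 2 = 2 * S - S₁ := Real.sq_sqrt hS2.le
  have hs2 : s ^ 2 = S := Real.sq_sqrt hS.le
  have hsum : u ^ 2 + v ^ 2 = 2 * s ^ 2 := by rw [hu2, hv2, hs2]; ring
  have hp : u * v ≤ s ^ 2 := by nlinarith [sq_nonneg (u - v)]
  have hprod : 0 ≤ (s ^ 2 - u * v) * (s ^ 2 + 2 * (u * v)) :=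
    mul_nonneg (by linarith) (by positivity)
  have hsqcmp : (2 * (u * v)) ^ 2 ≤ (s * (u + v)) ^ 2 := by nlinarith [hprod, hsum]
  have hkey : 2 * (u * v) ≤ s * (u + v) := by
    nlinarith [hsqcmp, mul_pos hs (add_pos hu hv), mul_pos hu hv]
  have hiff : 1 / u + 1 / v = 2 / s ↔ s * (u + v) = 2 * (u * v) := by
    rw [div_add_div _ _ hu.ne' hv.ne', div_eq_div_iff (by positivity) hs.ne']
    constructor <;> intro h <;> linarith [h]
  constructor
  · rw [div_add_div _ _ hu.ne' hv.ne', div_le_div_iff₀ hs (by positivity)]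
    nlinarith [hkey]
  · rw [hiff]
    constructor
    · intro h
      have hps : u * v = s ^ 2 := by nlinarith [h, hsum, mul_pos hu hv]
      have huv : u = v := by nlinarith [hsum, hps, sq_nonneg (u - v)]
      nlinarith [hu2, hv2, huv]
    · intro h
      have huS : u = s := by rw [hu', hs', h]
      have hvS : v = s := by rw [hv', hs']; congr 1; linarith
      rw [huS, hvS]; ring

/-- `l(a₁,a₂,c,S₁) ≥ 4√(2S)/S`, with equality iff a₁ = a₂ = 0, c = √S and S₁ = S. -/
theorem lfun_ge (S a₁ a₂ c S₁ : ℝ) (hS : 0 < S) (hc : 0 < c)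
    (hS₁ : 0 < S₁) (hS₁' : S₁ < 2 * S) :
    4 * Real.sqrt (2 * S) / S ≤ lfun S a₁ a₂ c S₁ ∧
    (lfun S a₁ a₂ c S₁ = 4 * Real.sqrt (2 * S) / S ↔
      a₁ = 0 ∧ a₂ = 0 ∧ c = Real.sqrt S ∧ S₁ = S) := by
  have hS2 : 0 < 2 * S - S₁ := by linarith
  obtain ⟨hb1, he1⟩ := lfun_branch S₁ a₁ c hS₁ hc
  obtain ⟨hb2, he2⟩ := lfun_branch (2 * S - S₁) a₂ c hS2 hc
  obtain ⟨hbs, hes⟩ := lfun_sumInv S S₁ hS hS₁ hS₁'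
  have h2r : (0:ℝ) < 2 * Real.sqrt 2 := by positivity
  have hsS : 0 < Real.sqrt S := Real.sqrt_pos.mpr hS
  have hR : 4 * Real.sqrt (2 * S) / S = 2 * Real.sqrt 2 * (2 / Real.sqrt S) := by
    rw [Real.sqrt_mul (by norm_num : (0:ℝ) ≤ 2)]
    field_simp
    linear_combination 4 * (Real.sq_sqrt hS.le)
  have hmid : 2 * Real.sqrt 2 * (2 / Real.sqrt S) ≤
      2 * Real.sqrt 2 * (1 / Real.sqrt S₁ + 1 / Real.sqrt (2 * S - S₁)) :=
    mul_le_mul_of_nonneg_left hbs h2r.le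
  have hsplit : 2 * Real.sqrt 2 * (1 / Real.sqrt S₁ + 1 / Real.sqrt (2 * S - S₁)) =
      2 * Real.sqrt 2 / Real.sqrt S₁ + 2 * Real.sqrt 2 / Real.sqrt (2 * S - S₁) := by
    ring
  have hlf : lfun S a₁ a₂ c S₁ =
      (Real.sqrt (S₁ ^ 2 / c ^ 2 + (a₁ + c) ^ 2) +
        Real.sqrt (S₁ ^ 2 / c ^ 2 + (a₁ - c) ^ 2)) / S₁ +
      (Real.sqrt ((2 * S - S₁) ^ 2 / c ^ 2 + (a₂ + c) ^ 2) +
        Real.sqrt ((2 * S - S₁) ^ 2 / c ^ 2 + (a₂ - c) ^ 2)) / (2 * S - S₁) := rfl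
  constructor
  · rw [hR, hlf]; linarith [hb1, hb2, hmid, hsplit]
  · constructor
    · intro heq
      rw [hlf] at heq; rw [hR] at heq
      have ht1 : (Real.sqrt (S₁ ^ 2 / c ^ 2 + (a₁ + c) ^ 2) +
          Real.sqrt (S₁ ^ 2 / c ^ 2 + (a₁ - c) ^ 2)) / S₁
          = 2 * Real.sqrt 2 / Real.sqrt S₁ := by linarith [hb1, hb2, hmid, hsplit]
      have ht2 : (Real.sqrt ((2 * S - S₁) ^ 2 / c ^ 2 + (a₂ + c) ^ 2) +
          Real.sqrt ((2 * S - S₁) ^ 2 / c ^ 2 + (a₂ - c) ^ 2)) / (2 * S - S₁)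
          = 2 * Real.sqrt 2 / Real.sqrt (2 * S - S₁) := by linarith [hb1, hb2, hmid, hsplit]
      have hts : 2 * Real.sqrt 2 * (1 / Real.sqrt S₁ + 1 / Real.sqrt (2 * S - S₁)) =
          2 * Real.sqrt 2 * (2 / Real.sqrt S) := by linarith [hb1, hb2, hsplit]
      have hSS : S₁ = S := hes.mp (mul_left_cancel₀ h2r.ne' hts)
      obtain ⟨ha1, hc1⟩ := he1.mp ht1
      obtain ⟨ha2, _⟩ := he2.mp ht2
      refine ⟨ha1, ha2, ?_, hSS⟩
      rw [hc1, hSS]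
    · rintro ⟨ha1, ha2, hcs, hSS⟩
      have hc1 : c = Real.sqrt S₁ := by rw [hcs, hSS]
      have hc2 : c = Real.sqrt (2 * S - S₁) := by
        rw [hcs]; congr 1; linarith
      have ht1 := he1.mpr ⟨ha1, hc1⟩
      have ht2 := he2.mpr ⟨ha2, hc2⟩
      have hts := hes.mpr hSS
      rw [hlf, ht1, ht2, hR, ← hsplit, hts]

end
end

section
/- Let S > 0, L = √(S/2), and α < 0. Let k > 0 satisfy k·tanh(k) = −αL, set λ = −2k²/L², and define u : ℝ² → ℝ by u(x,y) = cosh((k/(√2·L))·(x+y)) · cosh((k/(√2·L))·(y−x)). Then: (i) at every point of ℝ², ∂²u/∂x² + ∂²u/∂y² = −λ·u; and (ii) at every point p of each of the four open edges of the square Ω₀, the directional derivative of u at p in the direction of the outward unit normal ν to that edge satisfies ∇u(p)·ν + α·u(p) = 0. (Hence u is a Robin eigenfunction of Ω₀ with eigenvalue λ = −2(g⁻¹(−αL)/L)², where g(t) = t·tanh(t) for t ≥ 0.) -/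
/-- The explicit Robin eigenfunction of the square `Ω₀` (vertices (±√S,0), (0,±√S))
for negative Robin parameter α: with L = √(S/2), k > 0 the solution of
k·tanh k = −αL, λ = −2k²/L² and u(x,y) = cosh((k/(√2L))(x+y))·cosh((k/(√2L))(y−x)),
we have (i) Δu = −λu on ℝ², and (ii) on each open edge of the square (joining the
vertices (sx·√S, 0) and (0, sy·√S), with outward unit normal (sx,sy)/√2, for
sx, sy ∈ {1,−1}), the Robin boundary condition ∂u/∂ν + αu = 0 holds. -/
theorem robin_eigenfunction_square_neg (S L α k lam : ℝ) (hS : 0 < S)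
    (hL : L = Real.sqrt (S / 2)) (hα : α < 0) (hk : 0 < k)
    (hktanh : k * Real.tanh k = -α * L) (hlam : lam = -2 * k ^ 2 / L ^ 2)
    (u : ℝ → ℝ → ℝ)
    (hu : ∀ x y : ℝ, u x y =
      Real.cosh (k / (Real.sqrt 2 * L) * (x + y)) *
      Real.cosh (k / (Real.sqrt 2 * L) * (y - x))) :
    (∀ x y : ℝ,
      deriv (fun x' => deriv (fun x'' => u x'' y) x') x +
      deriv (fun y' => deriv (fun y'' => u x y'') y') y = -lam * u x y) ∧
    (∀ sx sy : ℝ, (sx = 1 ∨ sx = -1) → (sy = 1 ∨ sy = -1) →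
      ∀ t ∈ Set.Ioo (0 : ℝ) 1,
        sx / Real.sqrt 2 *
            deriv (fun x' => u x' ((1 - t) * sy * Real.sqrt S)) (t * sx * Real.sqrt S) +
        sy / Real.sqrt 2 *
            deriv (fun y' => u (t * sx * Real.sqrt S) y') ((1 - t) * sy * Real.sqrt S) +
        α * u (t * sx * Real.sqrt S) ((1 - t) * sy * Real.sqrt S) = 0) := by
  have hL0 : 0 < L := by rw [hL]; exact Real.sqrt_pos.mpr (by linarith)
  have hs2 : (0:ℝ) < Real.sqrt 2 := by positivity
  have hs2sq : Real.sqrt 2 * Real.sqrt 2 = 2 := Real.mul_self_sqrt (by norm_num)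
  set c : ℝ := k / (Real.sqrt 2 * L) with hc
  have hne : Real.sqrt 2 * L ≠ 0 := by positivity
  have hsqS : Real.sqrt S = Real.sqrt 2 * L := by
    have h2S : (2:ℝ) * (S/2) = S := by ring
    rw [hL, ← Real.sqrt_mul (by norm_num : (0:ℝ) ≤ 2) (S/2), h2S]
  have hu2 : ∀ x y, u x y = (Real.cosh (2*c*x) + Real.cosh (2*c*y))/2 := by
    intro x y
    rw [hu]
    have h1 := Real.cosh_add (c*(x+y)) (c*(y-x))
    have h2 := Real.cosh_sub (c*(x+y)) (c*(y-x))
    have e1 : c*(x+y) + c*(y-x) = 2*c*y := by ring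
    have e2 : c*(x+y) - c*(y-x) = 2*c*x := by ring
    rw [e1] at h1; rw [e2] at h2
    have e3 : k / (Real.sqrt 2 * L) * (x + y) = c*(x+y) := by rw [hc]
    have e4 : k / (Real.sqrt 2 * L) * (y - x) = c*(y-x) := by rw [hc]
    rw [e3, e4]
    linarith
  have hcoshD : ∀ (m x : ℝ), HasDerivAt (fun t => Real.cosh (m*t)) (m * Real.sinh (m*x)) x := by
    intro m x
    simpa [mul_comm, Function.comp_def] using (Real.hasDerivAt_cosh (m*x)).comp x ((hasDerivAt_id x).const_mul m)
  have hsinhD : ∀ (m x : ℝ), HasDerivAt (fun t => Real.sinh (m*t)) (m * Real.cosh (m*x)) x := by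
    intro m x
    simpa [mul_comm, Function.comp_def] using (Real.hasDerivAt_sinh (m*x)).comp x ((hasDerivAt_id x).const_mul m)
  have hux : ∀ x y : ℝ, deriv (fun t => u t y) x = c * Real.sinh (2*c*x) := by
    intro x y
    have hf : (fun t => u t y) = fun t => (Real.cosh (2*c*t) + Real.cosh (2*c*y))/2 :=
      funext fun t => hu2 t y
    rw [hf, (((hcoshD (2*c) x).add_const (Real.cosh (2*c*y))).div_const 2).deriv]
    ring
  have huy : ∀ x y : ℝ, deriv (fun t => u x t) y = c * Real.sinh (2*c*y) := by
    intro x y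
    have hf : (fun t => u x t) = fun t => (Real.cosh (2*c*x) + Real.cosh (2*c*t))/2 :=
      funext fun t => hu2 x t
    rw [hf, (((hcoshD (2*c) y).const_add (Real.cosh (2*c*x))).div_const 2).deriv]
    ring
  have hc2 : 2 * c ^ 2 * L ^ 2 = k ^ 2 := by
    rw [hc, div_pow, mul_pow, Real.sq_sqrt (by norm_num : (0:ℝ) ≤ 2)]
    field_simp
  constructor
  · intro x y
    have hxx : deriv (fun x' => deriv (fun t => u t y) x') x = 2*c^2*Real.cosh (2*c*x) := by
      have hf : (fun x' => deriv (fun t => u t y) x') = fun x' => c * Real.sinh (2*c*x') :=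
        funext fun x' => hux x' y
      rw [hf, ((hsinhD (2*c) x).const_mul c).deriv]
      ring
    have hyy : deriv (fun y' => deriv (fun t => u x t) y') y = 2*c^2*Real.cosh (2*c*y) := by
      have hf : (fun y' => deriv (fun t => u x t) y') = fun y' => c * Real.sinh (2*c*y') :=
        funext fun y' => huy x y'
      rw [hf, ((hsinhD (2*c) y).const_mul c).deriv]
      ring
    have hL2 : L ^ 2 ≠ 0 := by positivity
    have hlam2 : -2 * k ^ 2 / L ^ 2 = -(4 * c ^ 2) := by
      rw [← hc2, div_eq_iff hL2]; ring
    rw [hxx, hyy, hlam, hlam2, hu2]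
    ring
  · intro sx sy hsx hsy t ht
    have hCk : Real.cosh k ≠ 0 := ne_of_gt (Real.cosh_pos k)
    have hLne : L ≠ 0 := ne_of_gt hL0
    have hα' : α = -(k * Real.sinh k) / (L * Real.cosh k) := by
      rw [Real.tanh_eq_sinh_div_cosh] at hktanh
      field_simp at hktanh ⊢
      linarith
    have key : Real.cosh k * (Real.sinh (2*k*t) + Real.sinh (2*k*(1-t)))
        = Real.sinh k * (Real.cosh (2*k*t) + Real.cosh (2*k*(1-t))) := by
      have h1 := Real.sinh_sub (2*k*t) k
      have h2 := Real.sinh_sub (2*k*(1-t)) k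
      have h3 : 2*k*(1-t) - k = -(2*k*t - k) := by ring
      rw [h3, Real.sinh_neg] at h2
      linear_combination -h1 - h2
    have main : 1/Real.sqrt 2 * (c * Real.sinh (2*k*t)) + 1/Real.sqrt 2 * (c * Real.sinh (2*k*(1-t)))
        + α * ((Real.cosh (2*k*t) + Real.cosh (2*k*(1-t)))/2) = 0 := by
      have hs2sq' : Real.sqrt 2 ^ 2 = 2 := Real.sq_sqrt (by norm_num)
      rw [hα', hc]
      field_simp
      linear_combination (norm := ring_nf) (2*k) * key -
        k*Real.sinh k*(Real.cosh (2*k*t) + Real.cosh (2*k*(1-t))) * hs2sq'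
    have e1 : 2*c*(t*sx*Real.sqrt S) = sx*(2*k*t) := by
      rw [hsqS, hc]; field_simp
    have e2 : 2*c*((1-t)*sy*Real.sqrt S) = sy*(2*k*(1-t)) := by
      rw [hsqS, hc]; field_simp
    rw [hux, huy, hu2, e1, e2]
    rcases hsx with h | h <;> rcases hsy with h' | h' <;> subst h <;> subst h' <;>
      simp only [one_mul, neg_mul, neg_neg, Real.sinh_neg, Real.cosh_neg, mul_neg] <;>
      linear_combination main
end

section
/- Let S > 0 and L = √(S/2). For each α < 0 let k(α) > 0 be the unique positive solution of k·tanh(k) = −αL, and set λ₀(α) = −2·k(α)²/L². Then λ₀(α)/α → 2√2/√S as α → 0⁻; that is, the limit equals |∂Ω₀|/|Ω₀| = 4√(2S)/(2S), the ratio of the perimeter to the area of the square Ω₀ with vertices (±√S,0), (0,±√S). -/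
open Filter

private lemma tanh_pos' {t : ℝ} (ht : 0 < t) : 0 < Real.tanh t := by
  rw [Real.tanh_eq_sinh_div_cosh]
  exact div_pos (Real.sinh_pos_iff.2 ht) (Real.cosh_pos t)

private lemma tanh_mono' {a b : ℝ} (hab : a ≤ b) : Real.tanh a ≤ Real.tanh b := by
  have ha := Real.cosh_pos a
  have hb := Real.cosh_pos b
  have h1 : Real.tanh b - Real.tanh a
      = Real.sinh (b - a) / (Real.cosh a * Real.cosh b) := by
    rw [Real.tanh_eq_sinh_div_cosh, Real.tanh_eq_sinh_div_cosh, Real.sinh_sub]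
    field_simp
  have h2 : 0 ≤ Real.sinh (b - a) / (Real.cosh a * Real.cosh b) :=
    div_nonneg (Real.sinh_nonneg_iff.2 (sub_nonneg.2 hab)) (mul_pos ha hb).le
  linarith [h1 ▸ h2]

/-- sinh t / t → 1 as t → 0 (t ≠ 0). -/
private lemma sinh_div_self_tendsto :
    Tendsto (fun t : ℝ => Real.sinh t / t) (nhdsWithin 0 {0}ᶜ) (nhds 1) := by
  have h := (Real.hasDerivAt_sinh 0)
  rw [hasDerivAt_iff_tendsto_slope] at h
  simp only [Real.cosh_zero] at h
  refine h.congr (fun t => ?_)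
  simp [slope_def_field]

/-- t / tanh t → 1 as t → 0 (t ≠ 0). -/
private lemma self_div_tanh_tendsto :
    Tendsto (fun t : ℝ => t / Real.tanh t) (nhdsWithin 0 {0}ᶜ) (nhds 1) := by
  have h1 : Tendsto (fun t : ℝ => t / Real.sinh t) (nhdsWithin 0 {0}ᶜ) (nhds 1) := by
    have := sinh_div_self_tendsto.inv₀ (one_ne_zero)
    rw [inv_one] at this
    refine this.congr (fun t => ?_)
    rw [← one_div, one_div_div]
  have h2 : Tendsto (fun t : ℝ => Real.cosh t) (nhdsWithin 0 {0}ᶜ) (nhds 1) := by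
    have h := (Real.continuous_cosh.tendsto 0).mono_left
      (nhdsWithin_le_nhds : nhdsWithin (0:ℝ) {0}ᶜ ≤ nhds 0)
    simpa using h
  have h3 := h1.mul h2
  rw [mul_one] at h3
  refine h3.congr (fun t => ?_)
  rw [Real.tanh_eq_sinh_div_cosh, div_div_eq_mul_div, div_mul_eq_mul_div]

/-- Let L = √(S/2) and, for each α < 0, let k(α) > 0 be the unique positive solution
of k·tanh k = −αL, and λ₀(α) = −2k(α)²/L² the first Robin eigenvalue of the square
of area 2S. Then λ₀(α)/α → 2√2/√S as α → 0⁻, and this limit equals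
|∂Ω₀|/|Ω₀| = 4√(2S)/(2S). -/
theorem eigenvalue_ratio_limit (S L : ℝ) (hS : 0 < S) (hL : L = Real.sqrt (S / 2))
    (k : ℝ → ℝ) (hk : ∀ α : ℝ, α < 0 → 0 < k α ∧ k α * Real.tanh (k α) = -α * L) :
    Tendsto (fun α : ℝ => (-2 * (k α) ^ 2 / L ^ 2) / α) (nhdsWithin 0 (Set.Iio 0))
      (nhds (2 * Real.sqrt 2 / Real.sqrt S)) ∧
    2 * Real.sqrt 2 / Real.sqrt S = 4 * Real.sqrt (2 * S) / (2 * S) := by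
  have hLpos : 0 < L := by
    rw [hL]; exact Real.sqrt_pos.2 (by linarith)
  have hsS : 0 < Real.sqrt S := Real.sqrt_pos.2 hS
  have hs2 : 0 < Real.sqrt 2 := Real.sqrt_pos.2 (by norm_num)
  have hSsq : Real.sqrt S * Real.sqrt S = S := Real.mul_self_sqrt hS.le
  have h2sq : Real.sqrt 2 * Real.sqrt 2 = 2 := Real.mul_self_sqrt (by norm_num)
  -- identity : 2 / L = 2√2/√S
  have hLid : 2 / L = 2 * Real.sqrt 2 / Real.sqrt S := by
    rw [hL, Real.sqrt_div hS.le]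
    rw [div_div_eq_mul_div]
  -- k α → 0 as α → 0⁻
  have hk0 : Tendsto k (nhdsWithin 0 (Set.Iio 0)) (nhds 0) := by
    rw [Metric.tendsto_nhds]
    intro ε hε
    set c := min ε 1 with hc
    have hcpos : 0 < c := lt_min hε one_pos
    have htc : 0 < Real.tanh c := tanh_pos' hcpos
    have hδ : 0 < c * Real.tanh c / L := div_pos (mul_pos hcpos htc) hLpos
    rw [eventually_nhdsWithin_iff]
    have hmem : Set.Ioo (-(c * Real.tanh c / L)) (c * Real.tanh c / L) ∈ nhds (0:ℝ) :=
      Ioo_mem_nhds (by linarith) hδ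
    filter_upwards [hmem] with α hα hαneg
    obtain ⟨hkpos, hkeq⟩ := hk α hαneg
    have h3 : -(α * L) < c * Real.tanh c := by
      have h4 := mul_lt_mul_of_pos_right hα.1 hLpos
      rw [neg_mul, div_mul_cancel₀ _ hLpos.ne'] at h4
      linarith
    have hlt : k α < c := by
      by_contra h
      push_neg at h
      have h1 : Real.tanh c ≤ Real.tanh (k α) := tanh_mono' h
      have h2 : c * Real.tanh c ≤ k α * Real.tanh (k α) := by nlinarith
      rw [hkeq] at h2
      nlinarith
    rw [Real.dist_eq, sub_zero, abs_of_pos hkpos]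
    exact lt_of_lt_of_le hlt (min_le_left _ _)
  -- k α ≠ 0 eventually, so composition with t/tanh t
  have hkne : Tendsto k (nhdsWithin 0 (Set.Iio 0)) (nhdsWithin 0 {0}ᶜ) := by
    rw [tendsto_nhdsWithin_iff]
    refine ⟨hk0, ?_⟩
    rw [eventually_nhdsWithin_iff]
    filter_upwards with α hα
    exact (hk α hα).1.ne'
  have hmain : Tendsto (fun α : ℝ => 2 / L * (k α / Real.tanh (k α)))
      (nhdsWithin 0 (Set.Iio 0)) (nhds (2 / L)) := by
    have h := (self_div_tanh_tendsto.comp hkne).const_mul (2 / L)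
    rw [mul_one] at h
    exact h
  constructor
  · rw [← hLid]
    refine hmain.congr' ?_
    rw [eventuallyEq_nhdsWithin_iff]
    filter_upwards with α hα
    obtain ⟨hkpos, hkeq⟩ := hk α hα
    have htk : 0 < Real.tanh (k α) := tanh_pos' hkpos
    have hαne : α ≠ 0 := ne_of_lt hα
    have hne : -α * L ≠ 0 := (mul_pos (neg_pos.2 hα) hLpos).ne'
    have htanh : Real.tanh (k α) = -α * L / k α := by
      rw [eq_div_iff hkpos.ne']
      linarith [hkeq]
    rw [htanh, div_div_eq_mul_div]
    field_simp
  · rw [Real.sqrt_mul (by norm_num : (0:ℝ) ≤ 2) S]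
    rw [div_eq_div_iff hsS.ne' (by positivity)]
    nlinarith [hSsq]
end
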